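/- arXiv:2303.15560 — 9 statements merged into one kernel-verified Lean document; each statement's English description precedes it below -/
import Mathlib

section
/- Let C2 be the set of quadruples (a,b,c,d) of non-negative integers with b ≥ c ≥ d. Define θ21(a,b,c,d) = (a',b',c',d') by a' = max(d, 2c−b, b−2a), b' = max(c, a+d, a+2c−b), c' = min(b, 2b−2c+d, d+2a), d' = min(a, c−d, b−c), and θ12(a,b,c,d) = (a'',b'',c'',d'') by a'' = max(d, c−b, b−a), b'' = max(c, a−2b+2c, a+2d), c'' = min(b, 2b−c+d, a+d), d'' = min(a, 2b−c, c−2d). Then for every (a,b,c,d) in C2 one has θ12(θ21(a,b,c,d)) = (a,b,c,d). -/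
/-- Littelmann's transition map θ21 on adapted strings of type C2. -/
def theta21 : ℤ × ℤ × ℤ × ℤ → ℤ × ℤ × ℤ × ℤ
  | (a, b, c, d) =>
    (max d (max (2*c - b) (b - 2*a)),
     max c (max (a + d) (a + 2*c - b)),
     min b (min (2*b - 2*c + d) (d + 2*a)),
     min a (min (c - d) (b - c)))

/-- Littelmann's transition map θ12 on adapted strings of type C2. -/
def theta12 : ℤ × ℤ × ℤ × ℤ → ℤ × ℤ × ℤ × ℤ
  | (a, b, c, d) =>
    (max d (max (c - b) (b - a)),
     max c (max (a - 2*b + 2*c) (a + 2*d)),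
     min b (min (2*b - c + d) (a + d)),
     min a (min (2*b - c) (c - 2*d)))

theorem theta12_theta21_fst (a b c d : ℤ) : (theta12 (theta21 (a, b, c, d))).1 = a := by
  simp only [theta21, theta12]
  omega

theorem theta12_theta21_snd_fst (a b c d : ℤ) :
    (theta12 (theta21 (a, b, c, d))).2.1 = b := by
  simp only [theta21, theta12]
  omega

theorem theta12_theta21_snd_snd_fst (a b c d : ℤ) :
    (theta12 (theta21 (a, b, c, d))).2.2.1 = c := by
  simp only [theta21, theta12]
  omega

theorem theta12_theta21_snd_snd_snd (a b c d : ℤ) :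
    (theta12 (theta21 (a, b, c, d))).2.2.2 = d := by
  simp only [theta21, theta12]
  omega

theorem theta12_theta21_general (a b c d : ℤ) :
    theta12 (theta21 (a, b, c, d)) = (a, b, c, d) :=
  Prod.ext (theta12_theta21_fst a b c d) <|
    Prod.ext (theta12_theta21_snd_fst a b c d) <|
      Prod.ext (theta12_theta21_snd_snd_fst a b c d) (theta12_theta21_snd_snd_snd a b c d)

/-- For every quadruple in the cone C2 (non-negative integers with b ≥ c ≥ d),
θ12 ∘ θ21 is the identity. -/
theorem theta12_theta21 (a b c d : ℤ)
    (ha : 0 ≤ a) (hb : 0 ≤ b) (hc : 0 ≤ c) (hd : 0 ≤ d)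
    (hbc : b ≥ c) (hcd : c ≥ d) :
    theta12 (theta21 (a, b, c, d)) = (a, b, c, d) :=
  theta12_theta21_general a b c d
end

section
/- Let λ1, λ2 ≥ 0 be integers and (a,b,c,d) non-negative integers satisfying the Littelmann inequalities for (λ1,λ2). Assume 0 < d < λ1 and b = λ1 − 2d + 2c. Then (a, b, c+1, d+1) satisfies the Littelmann inequalities for (λ1, λ2+1) together with the preatom condition for (λ1, λ2+1); in particular b ≥ c+1. -/
/-- The Littelmann inequalities for (λ1,λ2) on a quadruple (a,b,c,d). -/
def LittelmannIneq (l1 l2 a b c d : ℤ) : Prop :=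
  b ≥ c ∧ c ≥ d ∧ d ≤ l1 ∧ c ≤ l2 + d ∧ b ≤ l1 - 2*d + 2*c ∧ a ≤ l2 + d - 2*c + b

/-- The preatom condition for (λ1,λ2) on a quadruple (a,b,c,d). -/
def PreatomCond (l1 _l2 b c d : ℤ) : Prop :=
  d = 0 ∨ d = l1 ∨ b = l1 - 2*d + 2*c

theorem psi_case_interior_general (l1 l2 a b c d : ℤ)
    (hdl : d < l1)
    (hL : LittelmannIneq l1 l2 a b c d)
    (hbeq : b = l1 - 2*d + 2*c) :
    LittelmannIneq l1 (l2 + 1) a b (c+1) (d+1) ∧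
      PreatomCond l1 (l2 + 1) b (c+1) (d+1) ∧ b ≥ c + 1 := by
  obtain ⟨-, hdc, -, hcl, -, hal⟩ := hL
  -- b - c = (l1 - d) + (c - d) > 0
  have hcb : b ≥ c + 1 := by omega
  exact ⟨⟨hcb, by omega, by omega, by omega, by omega, by omega⟩, Or.inr (Or.inr (by omega)), hcb⟩

/-- If (a,b,c,d) satisfies the Littelmann inequalities for (λ1,λ2),
0 < d < λ1 and b = λ1 − 2d + 2c, then (a,b,c+1,d+1) satisfies the Littelmann
inequalities and the preatom condition for (λ1,λ2+1); in particular b ≥ c+1. -/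
theorem psi_case_interior (l1 l2 a b c d : ℤ)
    (hl1 : 0 ≤ l1) (hl2 : 0 ≤ l2)
    (ha : 0 ≤ a) (hb : 0 ≤ b) (hc : 0 ≤ c) (hd : 0 < d) (hdl : d < l1)
    (hL : LittelmannIneq l1 l2 a b c d)
    (hbeq : b = l1 - 2*d + 2*c) :
    LittelmannIneq l1 (l2 + 1) a b (c+1) (d+1) ∧
      PreatomCond l1 (l2 + 1) b (c+1) (d+1) ∧ b ≥ c + 1 :=
  psi_case_interior_general l1 l2 a b c d hdl hL hbeq
end

section
/- Let λ1, λ2 ≥ 0 be integers and (a,b,c,0) non-negative integers satisfying the Littelmann inequalities for (λ1,λ2) (in particular b ≥ c ≥ 0, c ≤ λ2, b ≤ λ1+2c, a ≤ λ2−2c+b). Then the maximal integer k with 0 ≤ k ≤ λ2 such that (a, b−k, c−k, 0) consists of non-negative integers satisfying the Littelmann inequalities for (λ1, λ2−k) equals min(c, λ1 + 2c − b). -/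
theorem littelmannIneq_sub_iff {l1 l2 a b c d k : ℤ} (hk : 0 ≤ k) :
    LittelmannIneq l1 (l2 - k) a (b - k) (c - k) d ↔
      LittelmannIneq l1 l2 a b c d ∧ k ≤ c - d ∧ k ≤ l1 - 2 * d + 2 * c - b := by
  unfold LittelmannIneq
  omega

theorem atomic_number_d_zero_general (l1 l2 a b c : ℤ)
    (ha : 0 ≤ a)
    (hL : LittelmannIneq l1 l2 a b c 0) :
    IsGreatest {k : ℤ | 0 ≤ k ∧ k ≤ l2 ∧ 0 ≤ a ∧ 0 ≤ b - k ∧ 0 ≤ c - k ∧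
        LittelmannIneq l1 (l2 - k) a (b - k) (c - k) 0}
      (min c (l1 + 2*c - b)) := by
  obtain ⟨hbc, hc, -, hcl2, hbl1, -⟩ := id hL
  refine ⟨?_, fun k ⟨hk, _, _, _, _, hkL⟩ => ?_⟩
  · have hm : 0 ≤ min c (l1 + 2 * c - b) := le_min hc (by omega)
    have hmc : min c (l1 + 2 * c - b) ≤ c := min_le_left _ _
    have hml : min c (l1 + 2 * c - b) ≤ l1 + 2 * c - b := min_le_right _ _
    exact ⟨hm, by omega, ha, by omega, by omega,
      (littelmannIneq_sub_iff hm).2 ⟨hL, by omega, by omega⟩⟩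
  · obtain ⟨-, hkc, hkl⟩ := (littelmannIneq_sub_iff hk).1 hkL
    exact le_min (by omega) (by omega)

/-- For a quadruple (a,b,c,0) satisfying the Littelmann inequalities for (λ1,λ2),
the maximal 0 ≤ k ≤ λ2 such that (a,b−k,c−k,0) consists of non-negative integers
satisfying the Littelmann inequalities for (λ1,λ2−k) is min(c, λ1+2c−b). -/
theorem atomic_number_d_zero (l1 l2 a b c : ℤ)
    (hl1 : 0 ≤ l1) (hl2 : 0 ≤ l2)
    (ha : 0 ≤ a) (hb : 0 ≤ b) (hc : 0 ≤ c)
    (hL : LittelmannIneq l1 l2 a b c 0) :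
    IsGreatest {k : ℤ | 0 ≤ k ∧ k ≤ l2 ∧ 0 ≤ a ∧ 0 ≤ b - k ∧ 0 ≤ c - k ∧
        LittelmannIneq l1 (l2 - k) a (b - k) (c - k) 0}
      (min c (l1 + 2*c - b)) :=
  atomic_number_d_zero_general l1 l2 a b c ha hL
end

section
/- Let W be the group of linear transformations of Q² generated by s1(x,y) = (−x, x+y) and s2(x,y) = (x+2y, −y). Let λ1, λ2 be non-negative integers, λ = (λ1,λ2), and µ = (µ1,µ2) ∈ Z². Then µ lies in the convex hull of the W-orbit of λ if and only if the following inequalities hold: |µ1| ≤ λ1 + 2λ2, |µ1 + µ2| ≤ λ1 + λ2, |µ2| ≤ λ1 + λ2, and |µ1 + 2µ2| ≤ λ1 + 2λ2. -/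
/-- The simple reflection s1(x,y) = (−x, x+y) as a linear map on ℚ². -/
def s1Lin : (ℚ × ℚ) →ₗ[ℚ] (ℚ × ℚ) :=
  LinearMap.prod (-(LinearMap.fst ℚ ℚ ℚ)) (LinearMap.fst ℚ ℚ ℚ + LinearMap.snd ℚ ℚ ℚ)

/-- The simple reflection s2(x,y) = (x+2y, −y) as a linear map on ℚ². -/
def s2Lin : (ℚ × ℚ) →ₗ[ℚ] (ℚ × ℚ) :=
  LinearMap.prod (LinearMap.fst ℚ ℚ ℚ + (2 : ℚ) • LinearMap.snd ℚ ℚ ℚ)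
    (-(LinearMap.snd ℚ ℚ ℚ))

lemma s1Lin_involutive : Function.Involutive s1Lin := by
  intro p
  simp [s1Lin, LinearMap.prod_apply]

lemma s2Lin_involutive : Function.Involutive s2Lin := by
  intro p
  simp [s2Lin, LinearMap.prod_apply]

/-- s1 as a linear automorphism of ℚ². -/
def s1Equiv : (ℚ × ℚ) ≃ₗ[ℚ] (ℚ × ℚ) :=
  { s1Lin with
    invFun := s1Lin
    left_inv := s1Lin_involutive
    right_inv := s1Lin_involutive }

/-- s2 as a linear automorphism of ℚ². -/
def s2Equiv : (ℚ × ℚ) ≃ₗ[ℚ] (ℚ × ℚ) :=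
  { s2Lin with
    invFun := s2Lin
    left_inv := s2Lin_involutive
    right_inv := s2Lin_involutive }

/-- The Weyl group of type C2: the group of linear transformations of ℚ²
generated by s1 and s2. -/
def WeylC2 : Subgroup ((ℚ × ℚ) ≃ₗ[ℚ] (ℚ × ℚ)) :=
  Subgroup.closure {s1Equiv, s2Equiv}


/-!
The octagon cut out by the four inequalities is convex, and `s1`, `s2` permute its defining
functionals `x`, `x + y`, `y`, `x + 2y` up to sign, so it is `W`-invariant; since it contains `λ`,
it contains the convex hull of the orbit.

Conversely, `s1 s2 s1 : (x, y) ↦ (-x - 2y, y)` preserves every horizontal line, so along with a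
point `(x, y)` the hull contains the horizontal segment between it and its mirror image. Every
horizontal slice of the octagon is such a segment, with an endpoint on one of the edges
`[λ, s2 λ]`, `[λ, s1 λ]`, `[s2 λ, s2 s1 λ]` of the orbit polygon.
-/

open Set Pointwise

theorem Convex.add_smul_mem_of_mem_Icc {𝕜 E : Type*} [Field 𝕜] [LinearOrder 𝕜]
    [IsStrictOrderedRing 𝕜] [AddCommGroup E] [Module 𝕜 E] {s : Set E} (hs : Convex 𝕜 s)
    {p v : E} {c d t : 𝕜}
    (hc : p + c • v ∈ s) (hd : p + d • v ∈ s) (ht : t ∈ Icc c d) : p + t • v ∈ s := by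
  obtain ⟨α, β, hα, hβ, hαβ, rfl⟩ := (Convex.mem_Icc (ht.1.trans ht.2)).1 ht
  convert hs hc hd hα hβ hαβ using 1
  linear_combination (norm := module) -hαβ • p

theorem apply_mem_convexHull_orbit {𝕜 E : Type*} [Semiring 𝕜] [PartialOrder 𝕜]
    [AddCommMonoid E] [Module 𝕜 E] {G : Subgroup (E ≃ₗ[𝕜] E)} {x p : E} {g : E ≃ₗ[𝕜] E}
    (hg : g ∈ G) (hp : p ∈ convexHull 𝕜 ((fun g : E ≃ₗ[𝕜] E => g x) '' G)) :
    g p ∈ convexHull 𝕜 ((fun g : E ≃ₗ[𝕜] E => g x) '' G) := by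
  have hmaps : (g : E →ₗ[𝕜] E) '' ((fun g : E ≃ₗ[𝕜] E => g x) '' G) ⊆
      (fun g : E ≃ₗ[𝕜] E => g x) '' G := by
    rintro _ ⟨_, ⟨h, hh, rfl⟩, rfl⟩
    exact ⟨g * h, mul_mem hg hh, rfl⟩
  refine convexHull_mono hmaps ?_
  rw [← LinearMap.image_convexHull]
  exact ⟨p, hp, rfl⟩

@[simp] lemma s1Equiv_apply (x y : ℚ) : s1Equiv (x, y) = (-x, x + y) := rfl

@[simp] lemma s2Equiv_apply (x y : ℚ) : s2Equiv (x, y) = (x + 2 * y, -y) := rfl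

lemma s1Equiv_mem_weylC2 : s1Equiv ∈ WeylC2 := Subgroup.subset_closure (by simp)

lemma s2Equiv_mem_weylC2 : s2Equiv ∈ WeylC2 := Subgroup.subset_closure (by simp)

def octagon (a b : ℚ) : Set (ℚ × ℚ) :=
  {q | |q.1| ≤ b ∧ |q.1 + q.2| ≤ a ∧ |q.2| ≤ a ∧ |q.1 + 2 * q.2| ≤ b}

lemma convex_octagon (a b : ℚ) : Convex ℚ (octagon a b) := by
  have convex_abs_le (f : ℚ × ℚ →ₗ[ℚ] ℚ) (c : ℚ) : Convex ℚ {q | |f q| ≤ c} := by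
    simpa only [preimage, mem_Icc, abs_le] using (convex_Icc (-c) c).linear_preimage f
  let x := LinearMap.fst ℚ ℚ ℚ
  let y := LinearMap.snd ℚ ℚ ℚ
  exact (convex_abs_le x b).inter <| (convex_abs_le (x + y) a).inter <|
    (convex_abs_le y a).inter (convex_abs_le (x + (2 : ℚ) • y) b)

lemma weylC2_le_stabilizer_octagon (a b : ℚ) :
    WeylC2 ≤ MulAction.stabilizer _ (octagon a b) := by
  refine Subgroup.closure_le _ |>.2 <| insert_subset_iff.2 ⟨?_, singleton_subset_iff.2 ?_⟩ <;>
  · rw [SetLike.mem_coe, MulAction.mem_stabilizer_set]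
    rintro ⟨x, y⟩
    simp only [LinearEquiv.smul_def, s1Equiv_apply, s2Equiv_apply, octagon, mem_ofPred_eq]
    ring_nf
    rw [abs_neg]
    tauto

lemma apply_mem_octagon_iff {a b : ℚ} {w : (ℚ × ℚ) ≃ₗ[ℚ] (ℚ × ℚ)} (hw : w ∈ WeylC2)
    {p : ℚ × ℚ} : w p ∈ octagon a b ↔ p ∈ octagon a b :=
  MulAction.mem_stabilizer_set.1 (weylC2_le_stabilizer_octagon a b hw) p

lemma convexHull_weylC2_orbit_subset_octagon {l1 l2 : ℚ} (hl1 : 0 ≤ l1) (hl2 : 0 ≤ l2) :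
    convexHull ℚ ((fun w : (ℚ × ℚ) ≃ₗ[ℚ] (ℚ × ℚ) => w (l1, l2)) '' WeylC2) ⊆
      octagon (l1 + l2) (l1 + 2 * l2) := by
  have hl : (l1, l2) ∈ octagon (l1 + l2) (l1 + 2 * l2) := by
    simp only [octagon, mem_ofPred_eq]
    refine ⟨?_, ?_, ?_, ?_⟩ <;> rw [abs_of_nonneg (by positivity)] <;> linarith
  refine convexHull_min ?_ (convex_octagon _ _)
  rintro _ ⟨w, hw, rfl⟩
  exact (apply_mem_octagon_iff hw).2 hl

section

variable {l1 l2 : ℚ}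

local notation "C" =>
  convexHull ℚ ((fun w : (ℚ × ℚ) ≃ₗ[ℚ] (ℚ × ℚ) => w (l1, l2)) '' WeylC2)

lemma apply_mem_convexHull_weylC2_orbit {w : (ℚ × ℚ) ≃ₗ[ℚ] (ℚ × ℚ)} (hw : w ∈ WeylC2) :
    w (l1, l2) ∈ C :=
  subset_convexHull ℚ _ ⟨w, hw, rfl⟩

lemma mem_convexHull_weylC2_orbit_of_abs_add_le {x y x' : ℚ} (h : (x, y) ∈ C)
    (hx' : |x' + y| ≤ x + y) : (x', y) ∈ C := by
  have hrefl : (-x - 2 * y, y) ∈ C := by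
    convert apply_mem_convexHull_orbit
      (mul_mem (mul_mem s1Equiv_mem_weylC2 s2Equiv_mem_weylC2) s1Equiv_mem_weylC2) h using 1
    simp only [LinearEquiv.mul_apply, s1Equiv_apply, s2Equiv_apply, Prod.mk.injEq]
    constructor <;> ring
  have hc : (-y, y) + (-(x + y)) • ((1 : ℚ), (0 : ℚ)) ∈ C := by
    convert hrefl using 1; ext <;> simp; ring
  have hd : (-y, y) + (x + y) • ((1 : ℚ), (0 : ℚ)) ∈ C := by
    convert h using 1; ext <;> simp
  simpa using (convex_convexHull ℚ _).add_smul_mem_of_mem_Icc hc hd (abs_le.1 hx')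

lemma mem_convexHull_weylC2_orbit_of_abs_le {y : ℚ} (hy : |y| ≤ l2) :
    (l1 + l2 - y, y) ∈ C := by
  have hc : (l1 + l2, 0) + (-l2) • ((-1 : ℚ), (1 : ℚ)) ∈ C := by
    convert apply_mem_convexHull_weylC2_orbit s2Equiv_mem_weylC2 using 1; ext <;> simp; ring
  have hd : (l1 + l2, 0) + l2 • ((-1 : ℚ), (1 : ℚ)) ∈ C := by
    convert apply_mem_convexHull_weylC2_orbit (one_mem _) using 1; ext <;> simp
  convert (convex_convexHull ℚ _).add_smul_mem_of_mem_Icc hc hd (abs_le.1 hy) using 1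
  ext <;> simp; ring

lemma mem_convexHull_weylC2_orbit_of_le_of_le {y : ℚ} (hy₁ : l2 ≤ y) (hy₂ : y ≤ l1 + l2) :
    (l1 + 2 * l2 - 2 * y, y) ∈ C := by
  have hc : (l1 + 2 * l2, 0) + l2 • ((-2 : ℚ), (1 : ℚ)) ∈ C := by
    convert apply_mem_convexHull_weylC2_orbit (one_mem _) using 1; ext <;> simp; ring
  have hd : (l1 + 2 * l2, 0) + (l1 + l2) • ((-2 : ℚ), (1 : ℚ)) ∈ C := by
    convert apply_mem_convexHull_weylC2_orbit s1Equiv_mem_weylC2 using 1; ext <;> simp; ring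
  convert (convex_convexHull ℚ _).add_smul_mem_of_mem_Icc hc hd ⟨hy₁, hy₂⟩ using 1
  ext <;> simp; ring

lemma mem_convexHull_weylC2_orbit_of_le_of_le_neg {y : ℚ} (hy₁ : -(l1 + l2) ≤ y)
    (hy₂ : y ≤ -l2) : (l1 + 2 * l2, y) ∈ C := by
  have hc : (l1 + 2 * l2, 0) + (-(l1 + l2)) • ((0 : ℚ), (1 : ℚ)) ∈ C := by
    convert apply_mem_convexHull_weylC2_orbit
      (mul_mem s2Equiv_mem_weylC2 s1Equiv_mem_weylC2) using 1
    ext <;> simp; ring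
  have hd : (l1 + 2 * l2, 0) + (-l2) • ((0 : ℚ), (1 : ℚ)) ∈ C := by
    convert apply_mem_convexHull_weylC2_orbit s2Equiv_mem_weylC2 using 1; ext <;> simp
  convert (convex_convexHull ℚ _).add_smul_mem_of_mem_Icc hc hd ⟨hy₁, hy₂⟩ using 1
  ext <;> simp

lemma octagon_subset_convexHull_weylC2_orbit : octagon (l1 + l2) (l1 + 2 * l2) ⊆ C := by
  rintro ⟨x, y⟩ ⟨hx, hxy, hy, hx2y⟩
  simp only [abs_le] at hx hxy hy hx2y
  rcases le_or_gt y (-l2) with hy₁ | hy₁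
  · exact mem_convexHull_weylC2_orbit_of_abs_add_le
      (mem_convexHull_weylC2_orbit_of_le_of_le_neg hy.1 hy₁)
      (abs_le.2 ⟨by linarith, by linarith⟩)
  rcases le_or_gt y l2 with hy₂ | hy₂
  · exact mem_convexHull_weylC2_orbit_of_abs_add_le
      (mem_convexHull_weylC2_orbit_of_abs_le (abs_le.2 ⟨hy₁.le, hy₂⟩))
      (abs_le.2 ⟨by linarith, by linarith⟩)
  · exact mem_convexHull_weylC2_orbit_of_abs_add_le
      (mem_convexHull_weylC2_orbit_of_le_of_le hy₂.le hy.2)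
      (abs_le.2 ⟨by linarith, by linarith⟩)

end

theorem convexHull_weylC2_orbit_eq_octagon {l1 l2 : ℚ} (hl1 : 0 ≤ l1) (hl2 : 0 ≤ l2) :
    convexHull ℚ ((fun w : (ℚ × ℚ) ≃ₗ[ℚ] (ℚ × ℚ) => w (l1, l2)) '' WeylC2) =
      octagon (l1 + l2) (l1 + 2 * l2) :=
  (convexHull_weylC2_orbit_subset_octagon hl1 hl2).antisymm
    octagon_subset_convexHull_weylC2_orbit

/-- An integral weight µ lies in the convex hull of the Weyl group orbit of a
dominant weight λ = (λ1,λ2) iff the four octagon inequalities hold. -/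
theorem mem_convexHull_orbit_iff (l1 l2 : ℤ) (hl1 : 0 ≤ l1) (hl2 : 0 ≤ l2)
    (m1 m2 : ℤ) :
    ((m1 : ℚ), (m2 : ℚ)) ∈
        convexHull ℚ ((fun w : (ℚ × ℚ) ≃ₗ[ℚ] (ℚ × ℚ) =>
          w ((l1 : ℚ), (l2 : ℚ))) '' (WeylC2 : Set ((ℚ × ℚ) ≃ₗ[ℚ] (ℚ × ℚ)))) ↔
      (|m1| ≤ l1 + 2*l2 ∧ |m1 + m2| ≤ l1 + l2 ∧ |m2| ≤ l1 + l2 ∧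
        |m1 + 2*m2| ≤ l1 + 2*l2) := by
  rw [convexHull_weylC2_orbit_eq_octagon (by exact_mod_cast hl1) (by exact_mod_cast hl2)]
  simp only [octagon, mem_ofPred_eq]
  norm_cast
end

section
/- Let λ1, λ2 ≥ 0 and µ1, µ2 be integers with µ1 ≡ λ1 (mod 2), and suppose µ = (µ1,µ2) satisfies the octagon inequalities for λ = (λ1,λ2): |µ1| ≤ λ1+2λ2, |µ1+µ2| ≤ λ1+λ2, |µ2| ≤ λ1+λ2, |µ1+2µ2| ≤ λ1+2λ2. Then the maximal integer k ≥ 0 such that (µ1, µ2 − k) also satisfies the octagon inequalities for λ equals λ2 + µ2 + min(λ1, (λ1+µ1)/2, λ1+µ1). -/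
/-!
Below µ, the octagon constraints on the vertical line through µ are lower bounds on the second
coordinate only: `m1 + n ≥ -(l1 + l2)`, `n ≥ -(l1 + l2)` and `m1 + 2n ≥ -(l1 + 2 l2)`. By the
parity of `l1 + m1` the last one reads `n ≥ -l2 - (l1 + m1)/2`, so the slice ends at
`n = -(l2 + min (l1, (l1 + m1)/2, l1 + m1))`, and φ̂21 is the distance from `m2` to that end.
-/

/-- The octagon inequalities: µ lies in the convex hull of the Weyl orbit of λ. -/
def OctIneq (l1 l2 m1 m2 : ℤ) : Prop :=
  |m1| ≤ l1 + 2*l2 ∧ |m1 + m2| ≤ l1 + l2 ∧ |m2| ≤ l1 + l2 ∧ |m1 + 2*m2| ≤ l1 + 2*l2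

section Slice

variable {l1 l2 m1 m2 n : ℤ}

lemma OctIneq.iff_lower_bounds_of_le (h : OctIneq l1 l2 m1 m2) (hn : n ≤ m2) :
    OctIneq l1 l2 m1 n ↔
      -(l1 + l2) ≤ m1 + n ∧ -(l1 + l2) ≤ n ∧ -(l1 + 2 * l2) ≤ m1 + 2 * n := by
  obtain ⟨h1, h2, h3, h4⟩ := h
  simp only [OctIneq, abs_le] at *
  omega

lemma lower_bounds_iff_of_modEq (hpar : m1 ≡ l1 [ZMOD 2]) :
    (-(l1 + l2) ≤ m1 + n ∧ -(l1 + l2) ≤ n ∧ -(l1 + 2 * l2) ≤ m1 + 2 * n) ↔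
      -(l2 + min l1 (min ((l1 + m1) / 2) (l1 + m1))) ≤ n := by
  obtain ⟨d, hd⟩ := hpar.dvd
  omega

theorem OctIneq.iff_of_le_of_modEq (h : OctIneq l1 l2 m1 m2) (hpar : m1 ≡ l1 [ZMOD 2])
    (hn : n ≤ m2) :
    OctIneq l1 l2 m1 n ↔ -(l2 + min l1 (min ((l1 + m1) / 2) (l1 + m1))) ≤ n :=
  (h.iff_lower_bounds_of_le hn).trans (lower_bounds_iff_of_modEq hpar)

end Slice

theorem phihat21_formula_general (l1 l2 m1 m2 : ℤ)
    (hpar : m1 ≡ l1 [ZMOD 2]) (hoct : OctIneq l1 l2 m1 m2) :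
    IsGreatest {k : ℤ | 0 ≤ k ∧ OctIneq l1 l2 m1 (m2 - k)}
      (l2 + m2 + min l1 (min ((l1 + m1) / 2) (l1 + m1))) := by
  set b := l2 + min l1 (min ((l1 + m1) / 2) (l1 + m1))
  have hslice (k : ℤ) (hk : 0 ≤ k) : OctIneq l1 l2 m1 (m2 - k) ↔ -b ≤ m2 - k :=
    hoct.iff_of_le_of_modEq hpar (by omega)
  have hbottom : -b ≤ m2 := by simpa using (hslice 0 le_rfl).mp (by simpa using hoct)
  refine ⟨⟨by omega, (hslice _ (by omega)).mpr (by omega)⟩, ?_⟩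
  rintro k ⟨hk, hkoct⟩
  have := (hslice k hk).mp hkoct
  omega

/-- φ̂21(µ,λ): the maximal k ≥ 0 with (µ1, µ2 − k) still in the octagon equals
λ2 + µ2 + min(λ1, (λ1+µ1)/2, λ1+µ1). -/
theorem phihat21_formula (l1 l2 m1 m2 : ℤ) (hl1 : 0 ≤ l1) (hl2 : 0 ≤ l2)
    (hpar : m1 ≡ l1 [ZMOD 2]) (hoct : OctIneq l1 l2 m1 m2) :
    IsGreatest {k : ℤ | 0 ≤ k ∧ OctIneq l1 l2 m1 (m2 - k)}
      (l2 + m2 + min l1 (min ((l1 + m1) / 2) (l1 + m1))) :=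
  phihat21_formula_general l1 l2 m1 m2 hpar hoct
end

section
/- Let λ1, λ2 ≥ 0 and µ1, µ2 be integers with µ1 ≡ λ1 (mod 2), and suppose (µ1,µ2) satisfies the octagon inequalities for (λ1,λ2): |µ1| ≤ λ1+2λ2, |µ1+µ2| ≤ λ1+λ2, |µ2| ≤ λ1+λ2, |µ1+2µ2| ≤ λ1+2λ2. Then the maximal integer k ≥ 0 such that (µ1 − 2k, µ2) also satisfies the octagon inequalities for (λ1,λ2) equals (λ1+µ1)/2 + min(λ2 + µ2, ⌊(λ2+µ2)/2⌋, λ2). -/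
namespace OctIneq

variable {l1 l2 m1 m2 k : ℤ}

theorem sub_two_mul_iff (hoct : OctIneq l1 l2 m1 m2) (hk : 0 ≤ k) :
    OctIneq l1 l2 (m1 - 2*k) m2 ↔
      2*k ≤ (l1 + m1) + 2*l2 ∧ 2*k ≤ (l1 + m1) + (l2 + m2) ∧
        2*k ≤ (l1 + m1) + 2*(l2 + m2) := by
  simp only [OctIneq, abs_le] at hoct ⊢
  omega

theorem sub_two_mul_iff_le (hpar : m1 ≡ l1 [ZMOD 2]) (hoct : OctIneq l1 l2 m1 m2)
    (hk : 0 ≤ k) :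
    OctIneq l1 l2 (m1 - 2*k) m2 ↔
      k ≤ (l1 + m1) / 2 + min (l2 + m2) (min (Int.fdiv (l2 + m2) 2) l2) := by
  obtain ⟨c, hc⟩ := hpar.dvd
  obtain ⟨a, ha⟩ : ∃ a, l1 + m1 = 2*a := ⟨c + m1, by linarith⟩
  have hfloor : 2*k ≤ 2*a + (l2 + m2) ↔ k ≤ a + Int.fdiv (l2 + m2) 2 := by
    rw [Int.fdiv_eq_ediv_of_nonneg _ (by norm_num)]
    omega
  rw [hoct.sub_two_mul_iff hk, ha, Int.mul_ediv_cancel_left _ two_ne_zero, hfloor]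
  generalize Int.fdiv (l2 + m2) 2 = q
  omega

end OctIneq

theorem phihat12_formula_general (l1 l2 m1 m2 : ℤ)
    (hpar : m1 ≡ l1 [ZMOD 2]) (hoct : OctIneq l1 l2 m1 m2) :
    IsGreatest {k : ℤ | 0 ≤ k ∧ OctIneq l1 l2 (m1 - 2*k) m2}
      ((l1 + m1) / 2 + min (l2 + m2) (min (Int.fdiv (l2 + m2) 2) l2)) := by
  have hshift (k : ℤ) (hk : 0 ≤ k) := hoct.sub_two_mul_iff_le hpar hk
  have hnonneg : 0 ≤ (l1 + m1) / 2 + min (l2 + m2) (min (Int.fdiv (l2 + m2) 2) l2) :=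
    (hshift 0 le_rfl).mp (by simpa using hoct)
  exact ⟨⟨hnonneg, (hshift _ hnonneg).mpr le_rfl⟩, fun k ⟨hk, hkoct⟩ => (hshift k hk).mp hkoct⟩

/-- φ̂12(µ,λ): the maximal k ≥ 0 with (µ1 − 2k, µ2) still in the octagon equals
(λ1+µ1)/2 + min(λ2+µ2, ⌊(λ2+µ2)/2⌋, λ2). -/
theorem phihat12_formula (l1 l2 m1 m2 : ℤ) (hl1 : 0 ≤ l1) (hl2 : 0 ≤ l2)
    (hpar : m1 ≡ l1 [ZMOD 2]) (hoct : OctIneq l1 l2 m1 m2) :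
    IsGreatest {k : ℤ | 0 ≤ k ∧ OctIneq l1 l2 (m1 - 2*k) m2}
      ((l1 + m1) / 2 + min (l2 + m2) (min (Int.fdiv (l2 + m2) 2) l2)) :=
  phihat12_formula_general l1 l2 m1 m2 hpar hoct
end

section
/- Let λ1, λ2 ≥ 0 and µ1, µ2 be integers with µ1 ≡ λ1 (mod 2), and suppose (µ1,µ2) satisfies the octagon inequalities for (λ1,λ2): |µ1| ≤ λ1+2λ2, |µ1+µ2| ≤ λ1+λ2, |µ2| ≤ λ1+λ2, |µ1+2µ2| ≤ λ1+2λ2. Then the maximal integer k ≥ 0 such that (µ1 + 2k, µ2 − 2k) also satisfies the octagon inequalities for (λ1,λ2) equals (λ1−µ1)/2 + min(λ2 + µ1 + µ2, ⌊(λ2+µ1+µ2)/2⌋, λ2). -/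
def phiHat2 (l1 l2 m1 m2 : ℤ) : ℤ :=
  (l1 - m1) / 2 + min (l2 + m1 + m2) (min (Int.fdiv (l2 + m1 + m2) 2) l2)

section

variable {l1 l2 m1 m2 k : ℤ}

theorem octIneq_shift_iff (hoct : OctIneq l1 l2 m1 m2) (hk : 0 ≤ k) :
    OctIneq l1 l2 (m1 + 2*k) (m2 - 2*k) ↔
      2*k ≤ l1 + 2*l2 - m1 ∧ 2*k ≤ l1 + l2 + m2 ∧ 2*k ≤ l1 + 2*l2 + m1 + 2*m2 := by
  obtain ⟨h1, h2, h3, h4⟩ := hoct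
  simp only [OctIneq, abs_le] at h1 h2 h3 h4 ⊢
  omega

theorem le_phiHat2_iff (hpar : m1 ≡ l1 [ZMOD 2]) :
    k ≤ phiHat2 l1 l2 m1 m2 ↔
      2*k ≤ l1 + 2*l2 - m1 ∧ 2*k ≤ l1 + l2 + m2 ∧ 2*k ≤ l1 + 2*l2 + m1 + 2*m2 := by
  obtain ⟨a, ha⟩ := hpar.dvd
  rw [phiHat2, Int.fdiv_eq_ediv_of_nonneg _ zero_le_two]
  omega

end

theorem phihat2_formula_general (l1 l2 m1 m2 : ℤ)
    (hpar : m1 ≡ l1 [ZMOD 2]) (hoct : OctIneq l1 l2 m1 m2) :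
    IsGreatest {k : ℤ | 0 ≤ k ∧ OctIneq l1 l2 (m1 + 2*k) (m2 - 2*k)}
      ((l1 - m1) / 2 + min (l2 + m1 + m2) (min (Int.fdiv (l2 + m1 + m2) 2) l2)) := by
  have shift_iff (k : ℤ) (hk : 0 ≤ k) :
      OctIneq l1 l2 (m1 + 2*k) (m2 - 2*k) ↔ k ≤ phiHat2 l1 l2 m1 m2 :=
    (octIneq_shift_iff hoct hk).trans (le_phiHat2_iff hpar).symm
  have hset : {k : ℤ | 0 ≤ k ∧ OctIneq l1 l2 (m1 + 2*k) (m2 - 2*k)} =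
      Set.Icc 0 (phiHat2 l1 l2 m1 m2) := by
    ext k
    exact and_congr_right (shift_iff k)
  have hnonneg : 0 ≤ phiHat2 l1 l2 m1 m2 := (shift_iff 0 le_rfl).mp (by simpa using hoct)
  rw [hset]
  exact isGreatest_Icc hnonneg

/-- φ̂2(µ,λ): the maximal k ≥ 0 with (µ1 + 2k, µ2 − 2k) still in the octagon
equals (λ1−µ1)/2 + min(λ2+µ1+µ2, ⌊(λ2+µ1+µ2)/2⌋, λ2). -/
theorem phihat2_formula (l1 l2 m1 m2 : ℤ) (hl1 : 0 ≤ l1) (hl2 : 0 ≤ l2)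
    (hpar : m1 ≡ l1 [ZMOD 2]) (hoct : OctIneq l1 l2 m1 m2) :
    IsGreatest {k : ℤ | 0 ≤ k ∧ OctIneq l1 l2 (m1 + 2*k) (m2 - 2*k)}
      ((l1 - m1) / 2 + min (l2 + m1 + m2) (min (Int.fdiv (l2 + m1 + m2) 2) l2)) :=
  phihat2_formula_general l1 l2 m1 m2 hpar hoct
end

section
/- Let λ1, λ2 ≥ 0 be integers and (a,b,c,d) non-negative integers satisfying the Littelmann inequalities for (λ1,λ2) and the at-zero condition: either (c = 0 and d = 0), or (b = λ1 − 2d + 2c and (d ≤ 1 or c = λ2 + d)). Set µ1 = λ1 + 2a − 2b + 2c − 2d and µ2 = λ2 + (b + d) − 2(a + c). If µ1 < 0, then λ1 + 2a − 2b + 2c − 2d + max(d, 2c − b, b − 2a) = max(0, µ1 + µ2 − λ2, −µ2 − λ2). -/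
section

variable {l1 l2 a b c d : ℤ}

theorem weight_fst_eq_of_b_eq (hb : b = l1 - 2*d + 2*c) :
    l1 + 2*a - 2*b + 2*c - 2*d = 2*a - b := by
  subst hb
  ring

theorem phi1_at_zero_of_c_eq_zero_of_d_eq_zero (hc : c = 0) (hd : d = 0) (hbc : c ≤ b)
    (hbl1 : b ≤ l1 - 2*d + 2*c) (hl2 : 0 ≤ l2) (hm1neg : l1 + 2*a - 2*b + 2*c - 2*d < 0) :
    l1 + 2*a - 2*b + 2*c - 2*d + max d (max (2*c - b) (b - 2*a)) =
      max 0 (max (l1 - b - d) (2*(a + c) - b - d - 2*l2)) := by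
  have h2a : 2*a < b := by omega
  have hε1 : max d (max (2*c - b) (b - 2*a)) = b - 2*a := by
    rw [max_eq_right (by omega), max_eq_right (by omega)]
  have hrhs : max 0 (max (l1 - b - d) (2*(a + c) - b - d - 2*l2)) = l1 - b - d := by
    rw [max_eq_right (by omega), max_eq_left (by omega)]
  rw [hε1, hrhs, hc, hd]
  ring

theorem phi1_at_zero_of_b_eq_of_d_le_one (hb : b = l1 - 2*d + 2*c) (hd1 : d ≤ 1) (hd : 0 ≤ d)
    (hcd : d ≤ c) (hdl1 : d ≤ l1) (hcl2 : c ≤ l2 + d)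
    (hm1neg : l1 + 2*a - 2*b + 2*c - 2*d < 0) :
    l1 + 2*a - 2*b + 2*c - 2*d + max d (max (2*c - b) (b - 2*a)) =
      max 0 (max (l1 - b - d) (2*(a + c) - b - d - 2*l2)) := by
  rw [weight_fst_eq_of_b_eq hb] at hm1neg ⊢
  have hlhs : 2*a - b + max d (max (2*c - b) (b - 2*a)) = 0 := by
    rw [max_eq_right (by omega), max_eq_right (by omega)]
    ring
  have hrhs : max 0 (max (l1 - b - d) (2*(a + c) - b - d - 2*l2)) = 0 :=
    max_eq_left (max_le (by omega) (by omega))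
  rw [hlhs, hrhs]

theorem phi1_at_zero_of_b_eq_of_c_eq (hb : b = l1 - 2*d + 2*c) (hc : c = l2 + d) (hd : 0 ≤ d)
    (hcd : d ≤ c) (hdl1 : d ≤ l1) :
    l1 + 2*a - 2*b + 2*c - 2*d + max d (max (2*c - b) (b - 2*a)) =
      max 0 (max (l1 - b - d) (2*(a + c) - b - d - 2*l2)) := by
  rw [weight_fst_eq_of_b_eq hb]
  have hcb : 2*c - b ≤ d := by omega
  have hdc : l1 - b - d ≤ 0 := by omega
  have hlast : 2*(a + c) - b - d - 2*l2 = 2*a - b + d := by rw [hc]; ring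
  rw [hlast]
  omega

end

theorem phi1_at_zero_general (l1 l2 a b c d m1 m2 : ℤ)
    (hl2 : 0 ≤ l2)
    (hd : 0 ≤ d)
    (hL : LittelmannIneq l1 l2 a b c d)
    (hat0 : (c = 0 ∧ d = 0) ∨ (b = l1 - 2*d + 2*c ∧ (d ≤ 1 ∨ c = l2 + d)))
    (hm1 : m1 = l1 + 2*a - 2*b + 2*c - 2*d)
    (hm2 : m2 = l2 + (b + d) - 2*(a + c))
    (hm1neg : m1 < 0) :
    l1 + 2*a - 2*b + 2*c - 2*d + max d (max (2*c - b) (b - 2*a)) =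
      max 0 (max (m1 + m2 - l2) (-m2 - l2)) := by
  obtain ⟨hbc, hcd, hdl1, hcl2, hbl1, -⟩ := hL
  have hsum : m1 + m2 - l2 = l1 - b - d := by rw [hm1, hm2]; ring
  have hneg : -m2 - l2 = 2*(a + c) - b - d - 2*l2 := by rw [hm2]; ring
  rw [hm1] at hm1neg
  rw [hsum, hneg]
  rcases hat0 with ⟨hc0, hd0⟩ | ⟨hb, hd1 | hcl2d⟩
  · exact phi1_at_zero_of_c_eq_zero_of_d_eq_zero hc0 hd0 hbc hbl1 hl2 hm1neg
  · exact phi1_at_zero_of_b_eq_of_d_le_one hb hd1 hd hcd hdl1 hcl2 hm1neg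
  · exact phi1_at_zero_of_b_eq_of_c_eq hb hcl2d hd hcd hdl1

/-- Formula for φ1(T) of an element T with atomic number 0 and weight of
negative first coordinate. -/
theorem phi1_at_zero (l1 l2 a b c d m1 m2 : ℤ)
    (hl1 : 0 ≤ l1) (hl2 : 0 ≤ l2)
    (ha : 0 ≤ a) (hb : 0 ≤ b) (hc : 0 ≤ c) (hd : 0 ≤ d)
    (hL : LittelmannIneq l1 l2 a b c d)
    (hat0 : (c = 0 ∧ d = 0) ∨ (b = l1 - 2*d + 2*c ∧ (d ≤ 1 ∨ c = l2 + d)))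
    (hm1 : m1 = l1 + 2*a - 2*b + 2*c - 2*d)
    (hm2 : m2 = l2 + (b + d) - 2*(a + c))
    (hm1neg : m1 < 0) :
    l1 + 2*a - 2*b + 2*c - 2*d + max d (max (2*c - b) (b - 2*a)) =
      max 0 (max (m1 + m2 - l2) (-m2 - l2)) :=
  phi1_at_zero_general l1 l2 a b c d m1 m2 hl2 hd hL hat0 hm1 hm2 hm1neg
end

section
/- For every non-negative integer k, the number of pairs (µ1, µ2) of integers with µ1 even satisfying the octagon inequalities for λ = (0, k), namely |µ1| ≤ 2k, |µ1 + µ2| ≤ k, |µ2| ≤ k, |µ1 + 2µ2| ≤ 2k, equals (k+1)² + k². -/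
/-!
In the coordinates `u = µ1 + µ2`, `v = µ2` the conditions become `|u| ≤ k`, `|v| ≤ k` and
`u ≡ v (mod 2)`; the two remaining octagon inequalities follow from the triangle inequality.
The pairs in the box `[-k, k]²` with `u ≡ v ≡ k (mod 2)` form a `(k+1) × (k+1)` grid and those
with `u ≡ v ≢ k (mod 2)` a `k × k` grid.
-/

open Finset

def addShear (G : Type*) [AddGroup G] : G × G ≃ G × G where
  toFun p := (p.1 + p.2, p.2)
  invFun p := (p.1 - p.2, p.2)
  left_inv p := by simp
  right_inv p := by simp

theorem card_filter_product_iff {α : Type*} (s : Finset α) (P : α → Prop) [DecidablePred P] :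
    #((s ×ˢ s).filter (fun x => P x.1 ↔ P x.2)) =
      #(s.filter P) ^ 2 + #(s.filter (fun a => ¬P a)) ^ 2 := by
  rw [← card_filter_add_card_filter_not (fun x => P x.1), filter_filter, filter_filter, sq, sq,
    ← card_product, ← card_product]
  congr 2 <;> ext x <;> simp only [mem_filter, mem_product] <;> tauto

theorem card_filter_even_sub_Icc (a : ℤ) (n : ℕ) :
    #((Icc a (a + 2 * n)).filter (fun u => Even (u - a))) = n + 1 := by
  have himage : (Icc a (a + 2 * n)).filter (fun u => Even (u - a)) =
      (Icc (0 : ℤ) n).image (fun i => a + 2 * i) := by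
    ext u
    simp only [mem_filter, mem_Icc, mem_image, Int.even_iff]
    constructor
    · rintro ⟨⟨hau, hua⟩, heven⟩
      exact ⟨(u - a) / 2, by omega, by omega⟩
    · rintro ⟨i, ⟨hi0, hin⟩, rfl⟩
      omega
  rw [himage, card_image_of_injective _ fun i j h => by simpa using h, Int.card_Icc]
  omega

theorem card_filter_not_even_sub_Icc (a : ℤ) (n : ℕ) :
    #((Icc a (a + 2 * n)).filter (fun u => ¬Even (u - a))) = n := by
  have htotal := card_filter_add_card_filter_not (s := Icc a (a + 2 * n)) (fun u => Even (u - a))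
  rw [card_filter_even_sub_Icc, Int.card_Icc] at htotal
  omega

/-- The number of integral weights below kϖ2 in type C2: the pairs (µ1,µ2)
with µ1 even satisfying the octagon inequalities for (0,k) number (k+1)² + k². -/
theorem card_weights_below_komega2 (k : ℕ) :
    Set.ncard {p : ℤ × ℤ | Even p.1 ∧ |p.1| ≤ 2*(k : ℤ) ∧
        |p.1 + p.2| ≤ (k : ℤ) ∧ |p.2| ≤ (k : ℤ) ∧ |p.1 + 2*p.2| ≤ 2*(k : ℤ)} =
      (k + 1)^2 + k^2 := by
  set box := Icc (-(k : ℤ)) (-k + 2 * k)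
  have hweights : {p : ℤ × ℤ | Even p.1 ∧ |p.1| ≤ 2*(k : ℤ) ∧
        |p.1 + p.2| ≤ (k : ℤ) ∧ |p.2| ≤ (k : ℤ) ∧ |p.1 + 2*p.2| ≤ 2*(k : ℤ)} =
      addShear ℤ ⁻¹' ((box ×ˢ box).filter
        (fun x => Even (x.1 - -(k : ℤ)) ↔ Even (x.2 - -(k : ℤ))) : Set (ℤ × ℤ)) := by
    ext ⟨m₁, m₂⟩
    simp only [addShear, box, Set.mem_ofPred_eq, Set.mem_preimage, Equiv.coe_fn_mk, coe_filter,
      mem_product, mem_Icc, abs_le, Int.even_iff]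
    omega
  rw [hweights, Set.ncard_preimage_of_injective_subset_range (addShear ℤ).injective (by simp),
    Set.ncard_coe_finset, card_filter_product_iff _ (fun u => Even (u - -(k : ℤ))),
    card_filter_even_sub_Icc, card_filter_not_even_sub_Icc]
end
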